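/- Let p : ℕ → (0,1) be a sequence with n·p(n) → ∞ and p(n)·(ln n)² → 0 as n → ∞, and let k : ℕ → ℕ be a sequence with 1 ≤ k(n) < n for all large n and k(n)·p(n) − 2·ln(n·p(n)) − 2 → 0 as n → ∞. Then e·n·p(n)·φ(n, k(n)+1, p(n)) / φ(n, k(n), p(n)) → 1 as n → ∞; equivalently, e·n·p(n)·(n−k(n))·((k(n)+1)/k(n))^{k(n)−2}·p(n)·(1−p(n))^{k(n)−1} → 1. -/

import Mathlib

/-!
Since `φ(n,k+1,p) / φ(n,k,p) = (n−k)·((k+1)/k)^(k−2)·p·(1−p)^(k−1)`, both limits concern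
`e·n·p·(n−k)·((k+1)/k)^(k−2)·p·(1−p)^(k−1)`, whose logarithm is
`−(kp − 2 log(np) − 2) + p + ((k−2) log(1+1/k) − 1) + log(1 − k/n) + (k−1)(log(1−p) + p)`.
Each term tends to `0`. The first does by hypothesis. Since `kp ≈ 2 log(np) → ∞`, `k → ∞` and
`(k−2) log(1+1/k) → 1`. Also `k/n = kp/(np) = O(log(np)/(np)) → 0`, and
`|log(1−p) + p| = O(p²)` with `kp² = O(p log n) → 0`.
-/

open Filter

/-- `phi n k p`, the expected number of `k`-vertex induced trees in `G_{n,p}`. -/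
noncomputable def phi (n k : ℕ) (p : ℝ) : ℝ :=
  (n.choose k : ℝ) * (k : ℝ) ^ ((k : ℝ) - 2) * p ^ (k - 1) *
    (1 - p) ^ (k * (k - 1) / 2 - (k - 1))

open Real Topology

lemma succ_mul_div_two_sub_self (k : ℕ) (hk : 1 ≤ k) :
    (k + 1) * k / 2 - k = k * (k - 1) / 2 - (k - 1) + (k - 1) := by
  obtain ⟨m, rfl⟩ := Nat.exists_eq_add_of_le' hk
  have h₁ : (m + 1 + 1) * (m + 1) / 2 = (m + 1) + (m + 1) * m / 2 := by
    simpa [Nat.choose_two_right] using Nat.choose_succ_succ' (m + 1) 1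
  have h₂ : (m + 1) * m / 2 = m + m * (m - 1) / 2 := by
    simpa [Nat.choose_two_right] using Nat.choose_succ_succ' m 1
  rw [Nat.add_sub_cancel]
  omega

lemma phi_succ (n k : ℕ) (p : ℝ) (hk : 1 ≤ k) (hkn : k ≤ n) :
    phi n (k + 1) p =
      phi n k p * ((n - k) * ((k + 1) / k) ^ ((k : ℝ) - 2) * p * (1 - p) ^ (k - 1)) := by
  have hk₀ : (0 : ℝ) < k := by exact_mod_cast hk
  have hchoose : (n.choose (k + 1) : ℝ) = n.choose k * (n - k) / (k + 1) := by
    rw [eq_div_iff (by positivity), ← Nat.cast_sub hkn]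
    exact_mod_cast Nat.choose_succ_right_eq n k
  have hpow : ((k : ℝ) + 1) ^ ((k : ℝ) + 1 - 2) = ((k : ℝ) + 1) ^ ((k : ℝ) - 2) * (k + 1) := by
    rw [← Real.rpow_add_one (by positivity)]; ring_nf
  have hp : p ^ k = p ^ (k - 1) * p := by rw [← pow_succ, Nat.sub_add_cancel hk]
  unfold phi
  rw [Nat.add_sub_cancel, succ_mul_div_two_sub_self k hk, pow_add, hp,
    Real.div_rpow (by positivity) hk₀.le, hchoose]
  push_cast
  rw [hpow]
  field_simp

lemma phi_pos {n k : ℕ} {p : ℝ} (hk : 1 ≤ k) (hkn : k ≤ n) (hp₀ : 0 < p) (hp₁ : p < 1) :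
    0 < phi n k p := by
  have hchoose : (0 : ℝ) < n.choose k := by exact_mod_cast Nat.choose_pos hkn
  have hk₀ : (0 : ℝ) < k := by exact_mod_cast hk
  unfold phi
  positivity

lemma normalized_ratio_eq_exp {n p : ℝ} {k : ℕ} (hk : 1 ≤ k) (hkn : k < n) (hp₀ : 0 < p)
    (hp₁ : p < 1) :
    exp 1 * n * p * (n - k) * ((k + 1) / k) ^ ((k : ℝ) - 2) * p * (1 - p) ^ (k - 1) =
      exp (-(k * p - 2 * log (n * p) - 2) + p + ((k - 2) * log (1 + 1 / k) - 1) +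
        log (1 - k / n) + (k - 1) * (log (1 - p) + p)) := by
  have hk₀ : (0 : ℝ) < k := by exact_mod_cast hk
  have hnk : 0 < n - k := sub_pos.2 hkn
  have hq : 0 < 1 - p := sub_pos.2 hp₁
  have hn₀ : 0 < n := hk₀.trans hkn
  rw [← exp_log (by positivity : 0 < exp 1 * n * p * (n - k) * ((k + 1) / k) ^ ((k : ℝ) - 2) *
    p * (1 - p) ^ (k - 1)), one_sub_div hn₀.ne', one_add_div hk₀.ne']
  simp (disch := positivity) only [log_mul, log_div, log_exp, log_pow, log_rpow]
  congr 1
  push_cast [Nat.cast_sub hk]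
  ring

lemma tendsto_zero_of_tendsto_mul_of_one_le {α : Type*} {l : Filter α} {f g : α → ℝ}
    (hf : ∀ᶠ x in l, 0 ≤ f x) (hg : ∀ᶠ x in l, 1 ≤ g x)
    (h : Tendsto (fun x => f x * g x) l (𝓝 0)) : Tendsto f l (𝓝 0) :=
  squeeze_zero' hf
    (by filter_upwards [hf, hg] with x hfx hgx using le_mul_of_one_le_right hfx hgx) h

lemma tendsto_sub_two_mul_log_one_add_one_div_atTop :
    Tendsto (fun x : ℝ => (x - 2) * log (1 + 1 / x)) atTop (𝓝 1) := by
  have hlog : Tendsto (fun x : ℝ => log (1 + 1 / x)) atTop (𝓝 0) := by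
    simpa using (tendsto_const_nhds.add ((tendsto_const_nhds (x := (1 : ℝ))).div_atTop
      tendsto_id)).log (by norm_num : (1 : ℝ) + 0 ≠ 0)
  simpa [sub_mul] using (tendsto_mul_log_one_add_div_atTop 1).sub (hlog.const_mul 2)

lemma tendsto_mul_log_one_sub_add {α : Type*} {l : Filter α} {a x : α → ℝ}
    (hx : Tendsto x l (𝓝 0)) (hax : Tendsto (fun i => a i * x i ^ 2) l (𝓝 0)) :
    Tendsto (fun i => a i * (log (1 - x i) + x i)) l (𝓝 0) := by
  have hbound : ∀ᶠ i in l, ‖a i * (log (1 - x i) + x i)‖ ≤ |a i * x i ^ 2| / (1 - |x i|) := by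
    filter_upwards [(hx.abs (a := 0)).eventually (gt_mem_nhds (by norm_num : |(0:ℝ)| < 1))]
      with i hi
    have h := abs_log_sub_add_sum_range_le hi 1
    simp only [Finset.range_one, Finset.sum_singleton, zero_add, pow_one, Nat.cast_zero, div_one] at h
    rw [norm_mul, Real.norm_eq_abs, abs_mul, abs_pow, mul_div_assoc, add_comm]
    exact mul_le_mul_of_nonneg_left h (abs_nonneg _)
  refine squeeze_zero_norm' hbound ?_
  have h := hax.abs.div (tendsto_const_nhds.sub hx.abs) (by norm_num : (1 : ℝ) - |0| ≠ 0)
  rwa [abs_zero, sub_zero, zero_div] at h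

section

variable {p : ℕ → ℝ} {k : ℕ → ℕ}

lemma tendsto_mul_log_of_tendsto_mul_log_sq (hp : ∀ n, 0 ≤ p n)
    (h : Tendsto (fun n : ℕ => p n * log n ^ 2) atTop (𝓝 0)) :
    Tendsto (fun n : ℕ => p n * log n) atTop (𝓝 0) := by
  have hlog : ∀ᶠ n : ℕ in atTop, 1 ≤ log n :=
    (tendsto_log_atTop.comp tendsto_natCast_atTop_atTop).eventually_ge_atTop 1
  refine tendsto_zero_of_tendsto_mul_of_one_le ?_ hlog (by simpa [sq, mul_assoc] using h)
  filter_upwards [hlog] with n hn using mul_nonneg (hp n) (zero_le_one.trans hn)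

lemma tendsto_of_tendsto_mul_log_sq (hp : ∀ n, 0 ≤ p n)
    (h : Tendsto (fun n : ℕ => p n * log n ^ 2) atTop (𝓝 0)) :
    Tendsto p atTop (𝓝 0) :=
  tendsto_zero_of_tendsto_mul_of_one_le (.of_forall hp)
    ((tendsto_log_atTop.comp tendsto_natCast_atTop_atTop).eventually_ge_atTop 1)
    (tendsto_mul_log_of_tendsto_mul_log_sq hp h)

variable (hk2 : Tendsto (fun n : ℕ => (k n : ℝ) * p n - 2 * log (n * p n) - 2) atTop (𝓝 0))
include hk2

lemma eventually_mul_le_two_mul_log_add_three :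
    ∀ᶠ n in atTop, (k n : ℝ) * p n ≤ 2 * log (n * p n) + 3 := by
  filter_upwards [hk2.eventually (gt_mem_nhds one_pos)] with n hn
  linarith

lemma tendsto_natCast_atTop_of_tendsto_sub_log (hp₁ : ∀ n, p n ≤ 1)
    (h1 : Tendsto (fun n : ℕ => (n : ℝ) * p n) atTop atTop) :
    Tendsto (fun n => (k n : ℝ)) atTop atTop := by
  have hkp : Tendsto (fun n => (k n : ℝ) * p n) atTop atTop := by
    refine (hk2.add_atTop (tendsto_atTop_add_const_right _ 2
      ((tendsto_log_atTop.comp h1).const_mul_atTop two_pos))).congr fun n => ?_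
    simp only [Function.comp_apply]
    ring
  exact tendsto_atTop_mono (fun n => mul_le_of_le_one_right (Nat.cast_nonneg _) (hp₁ n)) hkp

lemma tendsto_mul_sq_of_tendsto_sub_log (hp₀ : ∀ n, 0 < p n) (hp₁ : ∀ n, p n ≤ 1)
    (h2 : Tendsto (fun n : ℕ => p n * log n ^ 2) atTop (𝓝 0)) :
    Tendsto (fun n => (k n : ℝ) * p n ^ 2) atTop (𝓝 0) := by
  have hbound : Tendsto (fun n : ℕ => 2 * (p n * log n) + 3 * p n) atTop (𝓝 0) := by
    simpa using ((tendsto_mul_log_of_tendsto_mul_log_sq (fun n => (hp₀ n).le) h2).const_mul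
      2).add ((tendsto_of_tendsto_mul_log_sq (fun n => (hp₀ n).le) h2).const_mul 3)
  refine squeeze_zero' (.of_forall fun n => by positivity) ?_ hbound
  filter_upwards [eventually_mul_le_two_mul_log_add_three hk2, eventually_ge_atTop 1]
    with n hn hn₁
  have hlog : log (n * p n) ≤ log n := by
    gcongr
    · exact mul_pos (by exact_mod_cast hn₁) (hp₀ n)
    · exact mul_le_of_le_one_right (Nat.cast_nonneg _) (hp₁ n)
  calc (k n : ℝ) * p n ^ 2 = k n * p n * p n := by ring
    _ ≤ (2 * log n + 3) * p n := by gcongr; exacts [(hp₀ n).le, by linarith]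
    _ = 2 * (p n * log n) + 3 * p n := by ring

lemma tendsto_div_of_tendsto_sub_log (hp₀ : ∀ n, 0 < p n)
    (h1 : Tendsto (fun n : ℕ => (n : ℝ) * p n) atTop atTop) :
    Tendsto (fun n => (k n : ℝ) / n) atTop (𝓝 0) := by
  have hlog : Tendsto (fun x : ℝ => (2 * log x + 3) / x) atTop (𝓝 0) := by
    have h := tendsto_pow_log_div_mul_add_atTop 1 0 1 one_ne_zero
    simp only [pow_one, one_mul, add_zero] at h
    simpa using ((h.const_mul 2).add (tendsto_inv_atTop_zero.const_mul 3)).congr fun x => by ring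
  refine squeeze_zero' (.of_forall fun n => by positivity) ?_ (by simpa using hlog.comp h1)
  filter_upwards [eventually_mul_le_two_mul_log_add_three hk2, eventually_ge_atTop 1]
    with n hn hn₁
  have hnp : 0 < (n : ℝ) * p n := mul_pos (by exact_mod_cast hn₁) (hp₀ n)
  calc (k n : ℝ) / n = k n * p n / (n * p n) := (mul_div_mul_right _ _ (hp₀ n).ne').symm
    _ ≤ (2 * log (n * p n) + 3) / (n * p n) := by gcongr

lemma tendsto_normalized_ratio_exponent (hp₀ : ∀ n, 0 < p n) (hp₁ : ∀ n, p n ≤ 1)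
    (h1 : Tendsto (fun n : ℕ => (n : ℝ) * p n) atTop atTop)
    (h2 : Tendsto (fun n : ℕ => p n * log n ^ 2) atTop (𝓝 0)) :
    Tendsto (fun n : ℕ => -((k n : ℝ) * p n - 2 * log (n * p n) - 2) + p n +
      ((k n - 2) * log (1 + 1 / k n) - 1) + log (1 - k n / n) +
      (k n - 1) * (log (1 - p n) + p n)) atTop (𝓝 0) := by
  have hp := tendsto_of_tendsto_mul_log_sq (fun n => (hp₀ n).le) h2
  have hk := tendsto_natCast_atTop_of_tendsto_sub_log hk2 hp₁ h1
  have hkp := tendsto_mul_sq_of_tendsto_sub_log hk2 hp₀ hp₁ h2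
  have hkn := tendsto_div_of_tendsto_sub_log hk2 hp₀ h1
  have hc := (tendsto_sub_two_mul_log_one_add_one_div_atTop.comp hk).sub_const 1
  have hd := (tendsto_const_nhds (x := (1 : ℝ))).sub hkn |>.log (by norm_num)
  have he := tendsto_mul_log_one_sub_add (a := fun n => (k n : ℝ) - 1) hp
    (by simpa [sub_mul] using hkp.sub (hp.pow 2))
  simpa using (((hk2.neg.add hp).add hc).add hd).add he

end

theorem phi_ratio_asymptotics (p : ℕ → ℝ) (hp : ∀ n, p n ∈ Set.Ioo (0 : ℝ) 1)
    (h1 : Tendsto (fun n : ℕ => (n : ℝ) * p n) atTop atTop)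
    (h2 : Tendsto (fun n : ℕ => p n * (Real.log n) ^ 2) atTop (nhds 0))
    (k : ℕ → ℕ) (hk : ∀ᶠ n : ℕ in atTop, 1 ≤ k n ∧ k n < n)
    (hk2 : Tendsto (fun n : ℕ => (k n : ℝ) * p n - 2 * Real.log (n * p n) - 2)
      atTop (nhds 0)) :
    Tendsto (fun n : ℕ =>
        Real.exp 1 * n * p n * phi n (k n + 1) (p n) / phi n (k n) (p n))
      atTop (nhds 1) ∧
    Tendsto (fun n : ℕ =>
        Real.exp 1 * n * p n * ((n : ℝ) - k n) *
          (((k n : ℝ) + 1) / (k n : ℝ)) ^ ((k n : ℝ) - 2) * p n *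
          (1 - p n) ^ (k n - 1))
      atTop (nhds 1) := by
  have hexponent := tendsto_normalized_ratio_exponent hk2 (fun n => (hp n).1)
    (fun n => (hp n).2.le) h1 h2
  have hsecond := ((continuous_exp.tendsto 0).comp hexponent).congr' <| by
    filter_upwards [hk] with n ⟨hk₁, hkn⟩
    exact (normalized_ratio_eq_exp hk₁ (by exact_mod_cast hkn) (hp n).1 (hp n).2).symm
  rw [exp_zero] at hsecond
  refine ⟨hsecond.congr' ?_, hsecond⟩
  filter_upwards [hk] with n ⟨hk₁, hkn⟩
  rw [phi_succ n (k n) (p n) hk₁ hkn.le, mul_div_assoc,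
    mul_div_cancel_left₀ _ (phi_pos hk₁ hkn.le (hp n).1 (hp n).2).ne']
  ring
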